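/- Let N ≥ 2 be a natural number. Assume 0 < π0 < 1 and π1, π2, π3 > 0. Define φ(L) = (1/2)·[(Σ_{i=1}^N ΔL_i)² + (2π3/π1)·Σ_{i≠j}(ΔL_i − ΔL_j)²], where ΔL_i = L_i − L_ss^N and Σ_{i≠j} denotes the sum over all ordered pairs (i,j) with i ≠ j. Then φ is a Lyapunov function on Ω_N for the vector field F: (i) φ(L) ≥ 0 for all L ∈ Ω_N, with φ(L) = 0 if and only if L_i = L_ss^N for all i; and (ii) the derivative of φ along the vector field satisfies ∇φ(L)·F(L) ≤ 0 for all L ∈ Ω_N, with equality only at the unique steady state L_i = L_ss^N for all i. -/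

import Mathlib

noncomputable section

open scoped BigOperators

/-- The flux `J(L)` for the `N`-flagella model. -/
def JN (π2 π3 : ℝ) {N : ℕ} (L : Fin N → ℝ) : ℝ :=
  1 / (1 + π2 * ∑ j, L j + π3 * ∑ j, (L j) ^ 2)

/-- The `i`-th component of the `N`-flagella vector field. -/
def FN (π0 π1 π2 π3 : ℝ) {N : ℕ} (i : Fin N) (L : Fin N → ℝ) : ℝ :=
  JN π2 π3 L * (1 - ∑ j, L j) - π0 - π1 * JN π2 π3 L * L i

/-- The domain `Ω_N`. -/
def OmegaN (N : ℕ) : Set (Fin N → ℝ) :=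
  {L | (∀ i, 0 ≤ L i) ∧ ∑ i, L i ≤ 1}

/-- The `N`-flagella steady-state length `L_ss^N`. -/
def LssN (π0 π1 π2 π3 : ℝ) (N : ℕ) : ℝ :=
  ((1 + π0 * π2 + π1 / N) / (2 * π0 * π3)) *
    (Real.sqrt (1 + 4 * (1 - π0) * π0 * π3 / (N * (1 + π0 * π2 + π1 / N) ^ 2)) - 1)

/-- The Lyapunov function `φ(L)` for the `N`-flagella model. -/
def phiN (π0 π1 π2 π3 : ℝ) {N : ℕ} (L : Fin N → ℝ) : ℝ :=
  (1 / 2) * ((∑ i, (L i - LssN π0 π1 π2 π3 N)) ^ 2 +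
    (2 * π3 / π1) * ∑ i, ∑ j ∈ Finset.univ.filter (· ≠ i),
      ((L i - LssN π0 π1 π2 π3 N) - (L j - LssN π0 π1 π2 π3 N)) ^ 2)

/-- The derivative of `φ` along the vector field `F`, i.e. `∇φ·F`. -/
def phiNDot (π0 π1 π2 π3 : ℝ) {N : ℕ} (L : Fin N → ℝ) : ℝ :=
  ∑ i, deriv (fun x => phiN π0 π1 π2 π3 (Function.update L i x)) (L i) *
    FN π0 π1 π2 π3 i L

/-! Write `S = ∑ i, (L i - L_ss)` and `Q = N ∑ L i ^ 2 - (∑ L i) ^ 2`, half the sum of all squared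
pairwise differences, so that `φ = S² / 2 + (2π₃/π₁) Q` and `∂ᵢφ = S + (4π₃/π₁)(N L i - ∑ L)`.
Summing `∂ᵢφ · Fᵢ` and eliminating `J` through `J (1 + π₂ ∑ L + π₃ ∑ L²) = 1` and `L_ss` through its
quadratic equation `N π₀ π₃ L_ss² + (N + N π₀ π₂ + π₁) L_ss = 1 - π₀` gives
`∇φ·F = -J ((N + N π₀ π₂ + π₁ + π₀ π₃ (∑ L + N L_ss)) S² + π₃ (π₀ S + 4) Q)`.
On `Ω_N` both coefficients are positive (`π₀ S ≥ -π₀ N L_ss ≥ -1`), so `φ` and `-∇φ·F` are positive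
combinations of `S²` and `Q ≥ 0`; these vanish together exactly when every `L i = L_ss`. -/

open Finset Function

section Sums

variable {ι : Type*} [Fintype ι]

theorem sum_sum_sub_sq (x : ι → ℝ) :
    ∑ i, ∑ j, (x i - x j) ^ 2 = 2 * (Fintype.card ι * ∑ i, x i ^ 2 - (∑ i, x i) ^ 2) := by
  simp only [sub_sq, sum_add_distrib, sum_sub_distrib, sum_const, card_univ, nsmul_eq_mul,
    ← mul_sum, ← sum_mul]
  ring

theorem forall_eq_iff_sum_eq_and_card_mul_sum_sq_eq (x : ι → ℝ) (c : ℝ) :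
    (∀ i, x i = c) ↔
      ∑ i, x i = Fintype.card ι * c ∧ Fintype.card ι * ∑ i, x i ^ 2 = (∑ i, x i) ^ 2 := by
  constructor
  · intro h
    simp only [h, sum_const, card_univ, nsmul_eq_mul, true_and]
    ring
  · rintro ⟨hsum, hsq⟩ i
    have hconst : ∀ j, x j = x i := by
      have hzero : ∑ j, ∑ k, (x j - x k) ^ 2 = 0 := by rw [sum_sum_sub_sq, hsq, sub_self, mul_zero]
      intro j
      have hrow := (sum_eq_zero_iff_of_nonneg fun _ _ => by positivity).mp hzero j (mem_univ _)
      have hji : (x j - x i) ^ 2 = 0 :=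
        (sum_eq_zero_iff_of_nonneg fun _ _ => sq_nonneg _).mp hrow i (mem_univ _)
      exact sub_eq_zero.mp (pow_eq_zero_iff two_ne_zero |>.mp hji)
    have : Nonempty ι := ⟨i⟩
    have hcard : (Fintype.card ι : ℝ) ≠ 0 := Nat.cast_ne_zero.mpr Fintype.card_ne_zero
    simp only [hconst, sum_const, card_univ, nsmul_eq_mul] at hsum
    exact mul_left_cancel₀ hcard hsum

theorem sum_affine_mul_affine (x : ι → ℝ) (a b c d : ℝ) :
    ∑ i, (a + b * x i) * (c + d * x i) =
      Fintype.card ι * a * c + (a * d + b * c) * ∑ i, x i + b * d * ∑ i, x i ^ 2 := by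
  have hexpand : ∀ i, (a + b * x i) * (c + d * x i) =
      a * c + (a * d + b * c) * x i + b * d * x i ^ 2 := fun i => by ring
  simp only [hexpand, sum_add_distrib, ← mul_sum, sum_const, card_univ, nsmul_eq_mul]
  ring

theorem hasDerivAt_sum_update [DecidableEq ι] (x : ι → ℝ) (i : ι) {g : ℝ → ℝ} {g' t : ℝ}
    (hg : HasDerivAt g g' t) : HasDerivAt (fun t => ∑ j, g (update x i t j)) g' t := by
  have hsplit : (fun t => ∑ j, g (update x i t j)) = fun t => g t + ∑ j ∈ univ \ {i}, g (x j) := by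
    funext t
    simp only [apply_update (fun _ => g)]
    exact sum_update_of_mem (mem_univ i) _ _
  rw [hsplit]
  exact hg.add_const _

end Sums

theorem sq_sum_le_natCast_mul_sum_sq {n : ℕ} (x : Fin n → ℝ) :
    (∑ i, x i) ^ 2 ≤ n * ∑ i, x i ^ 2 := by
  simpa using sq_sum_le_card_mul_sum_sq (s := univ) (f := x)

theorem mul_sq_add_mul_eq_zero_iff {a b s q : ℝ} (ha : 0 < a) (hb : 0 < b) (hq : 0 ≤ q) :
    a * s ^ 2 + b * q = 0 ↔ s = 0 ∧ q = 0 := by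
  rw [add_eq_zero_iff_of_nonneg (by positivity) (by positivity)]
  simp [ha.ne', hb.ne']

section SteadyState

variable {π0 π1 π2 π3 : ℝ} {N : ℕ}

theorem LssN_nonneg (hπ0 : 0 ≤ π0) (hπ0' : π0 ≤ 1) (hπ1 : 0 ≤ π1) (hπ2 : 0 ≤ π2)
    (hπ3 : 0 ≤ π3) : 0 ≤ LssN π0 π1 π2 π3 N := by
  have hdisc : 0 ≤ 4 * (1 - π0) * π0 * π3 / (N * (1 + π0 * π2 + π1 / N) ^ 2) := by
    have : 0 ≤ 1 - π0 := by linarith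
    positivity
  exact mul_nonneg (by positivity) (sub_nonneg.mpr (Real.one_le_sqrt.mpr (by linarith)))

theorem LssN_quadratic (hN : 0 < N) (hπ0 : 0 < π0) (hπ0' : π0 ≤ 1) (hπ1 : 0 ≤ π1)
    (hπ2 : 0 ≤ π2) (hπ3 : 0 < π3) :
    N * π0 * π3 * LssN π0 π1 π2 π3 N ^ 2 + (N + N * π0 * π2 + π1) * LssN π0 π1 π2 π3 N
      = 1 - π0 := by
  set a := 1 + π0 * π2 + π1 / N
  have hNpos : (0 : ℝ) < N := by exact_mod_cast hN
  have ha : 0 < a := by positivity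
  have hdisc : 0 ≤ 1 + 4 * (1 - π0) * π0 * π3 / (N * a ^ 2) := by
    have : 0 ≤ 1 - π0 := by linarith
    positivity
  have hw := Real.sq_sqrt hdisc
  set w := Real.sqrt (1 + 4 * (1 - π0) * π0 * π3 / (N * a ^ 2))
  have hNa : (N : ℝ) + N * π0 * π2 + π1 = N * a := by
    simp only [a]
    field_simp
  have hw' : N * a ^ 2 * (w ^ 2 - 1) = 4 * (1 - π0) * π0 * π3 := by
    rw [hw]
    field_simp
    ring
  change N * π0 * π3 * (a / (2 * π0 * π3) * (w - 1)) ^ 2 + _ * (a / (2 * π0 * π3) * (w - 1)) = _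
  rw [hNa]
  clear_value a w
  calc _ = N * a ^ 2 * (w ^ 2 - 1) / (4 * π0 * π3) := by field_simp; ring
    _ = 1 - π0 := by rw [hw']; field_simp

theorem natCast_mul_LssN_le (hN : 0 < N) (hπ0 : 0 < π0) (hπ0' : π0 ≤ 1) (hπ1 : 0 ≤ π1)
    (hπ2 : 0 ≤ π2) (hπ3 : 0 < π3) : N * LssN π0 π1 π2 π3 N ≤ 1 - π0 := by
  have hs := LssN_nonneg (N := N) hπ0.le hπ0' hπ1 hπ2 hπ3.le
  have := LssN_quadratic hN hπ0 hπ0' hπ1 hπ2 hπ3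
  have : 0 ≤ (N : ℝ) * π0 * π3 * LssN π0 π1 π2 π3 N ^ 2 := by positivity
  nlinarith [mul_nonneg (by positivity : (0 : ℝ) ≤ N * π0 * π2 + π1) hs]

end SteadyState

section Lyapunov

variable {π0 π1 π2 π3 : ℝ} {N : ℕ}

theorem phiN_eq (L : Fin N → ℝ) :
    phiN π0 π1 π2 π3 L = 1 / 2 * (∑ i, L i - N * LssN π0 π1 π2 π3 N) ^ 2 +
      2 * π3 / π1 * (N * ∑ i, L i ^ 2 - (∑ i, L i) ^ 2) := by
  have hoff : ∀ i, ∑ j ∈ univ.filter (· ≠ i),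
      ((L i - LssN π0 π1 π2 π3 N) - (L j - LssN π0 π1 π2 π3 N)) ^ 2 = ∑ j, (L i - L j) ^ 2 := by
    intro i
    simp only [sub_sub_sub_cancel_right, filter_ne']
    exact sum_erase univ (f := fun j => (L i - L j) ^ 2) (by simp)
  simp only [phiN, hoff, sum_sum_sub_sq, sum_sub_distrib, sum_const, card_univ, Fintype.card_fin,
    nsmul_eq_mul]
  ring

theorem phiN_nonneg (hπ1 : 0 ≤ π1) (hπ3 : 0 ≤ π3) (L : Fin N → ℝ) : 0 ≤ phiN π0 π1 π2 π3 L := by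
  have hvar := sub_nonneg.mpr (sq_sum_le_natCast_mul_sum_sq L)
  rw [phiN_eq]
  positivity

theorem phiN_eq_zero_iff (hπ1 : 0 < π1) (hπ3 : 0 < π3) (L : Fin N → ℝ) :
    phiN π0 π1 π2 π3 L = 0 ↔ ∀ i, L i = LssN π0 π1 π2 π3 N := by
  have hvar := sub_nonneg.mpr (sq_sum_le_natCast_mul_sum_sq L)
  rw [phiN_eq, mul_sq_add_mul_eq_zero_iff (by norm_num) (by positivity) hvar,
    forall_eq_iff_sum_eq_and_card_mul_sum_sq_eq, Fintype.card_fin, sub_eq_zero, sub_eq_zero]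

theorem hasDerivAt_phiN_update (L : Fin N → ℝ) (i : Fin N) :
    HasDerivAt (fun t => phiN π0 π1 π2 π3 (update L i t))
      (∑ j, L j - N * LssN π0 π1 π2 π3 N + 2 * (2 * π3 / π1) * (N * L i - ∑ j, L j)) (L i) := by
  have hsum := hasDerivAt_sum_update L i (hasDerivAt_id (L i))
  have hsum_sq := hasDerivAt_sum_update L i (hasDerivAt_pow 2 (L i))
  have := (((hsum.sub_const (N * LssN π0 π1 π2 π3 N)).pow 2).const_mul (1 / 2)).add
    (((hsum_sq.const_mul (N : ℝ)).sub (hsum.pow 2)).const_mul (2 * π3 / π1))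
  simp only [phiN_eq]
  refine this.congr_deriv ?_
  simp only [id, update_eq_self]
  ring

theorem phiNDot_eq (hN : 0 < N) (hπ0 : 0 < π0) (hπ0' : π0 ≤ 1) (hπ1 : 0 < π1) (hπ2 : 0 ≤ π2)
    (hπ3 : 0 < π3) (L : Fin N → ℝ) (hD : 1 + π2 * ∑ j, L j + π3 * ∑ j, L j ^ 2 ≠ 0) :
    phiNDot π0 π1 π2 π3 L = -JN π2 π3 L *
      ((N + N * π0 * π2 + π1 + π0 * π3 * (∑ j, L j + N * LssN π0 π1 π2 π3 N)) *
          (∑ j, L j - N * LssN π0 π1 π2 π3 N) ^ 2 +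
        π3 * (π0 * (∑ j, L j - N * LssN π0 π1 π2 π3 N) + 4) *
          (N * ∑ j, L j ^ 2 - (∑ j, L j) ^ 2)) := by
  set s := LssN π0 π1 π2 π3 N
  set T := ∑ j, L j
  set P := ∑ j, L j ^ 2
  set J := JN π2 π3 L
  set K := 2 * π3 / π1
  have hquad : N * π0 * π3 * s ^ 2 + (N + N * π0 * π2 + π1) * s = 1 - π0 :=
    LssN_quadratic hN hπ0 hπ0' hπ1.le hπ2 hπ3
  have hJ : J * (1 + π2 * T + π3 * P) = 1 := one_div_mul_cancel hD
  have hK : K * π1 = 2 * π3 := div_mul_cancel₀ _ hπ1.ne'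
  have hsum : phiNDot π0 π1 π2 π3 L =
      ∑ i, ((T - N * s - 2 * K * T) + 2 * K * N * L i) * ((J * (1 - T) - π0) + -π1 * J * L i) := by
    refine sum_congr rfl fun i _ => ?_
    rw [(hasDerivAt_phiN_update L i).deriv, FN]
    ring
  rw [hsum, sum_affine_mul_affine, Fintype.card_fin]
  linear_combination (2 * J * T ^ 2 - 2 * N * J * P) * hK + ((T - N * s) * N * π0) * hJ
    - ((T - N * s) * N * J) * hquad

theorem phiNDot_eq_neg_mul_of_mem_OmegaN (hN : 0 < N) (hπ0 : 0 < π0) (hπ0' : π0 ≤ 1)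
    (hπ1 : 0 < π1) (hπ2 : 0 ≤ π2) (hπ3 : 0 < π3) {L : Fin N → ℝ} (hL : L ∈ OmegaN N) :
    ∃ J > 0, ∃ a > 0, ∃ b > 0, phiNDot π0 π1 π2 π3 L = -J *
      (a * (∑ j, L j - N * LssN π0 π1 π2 π3 N) ^ 2 + b * (N * ∑ j, L j ^ 2 - (∑ j, L j) ^ 2)) := by
  have hT : 0 ≤ ∑ j, L j := sum_nonneg fun j _ => hL.1 j
  have hD : 0 < 1 + π2 * ∑ j, L j + π3 * ∑ j, L j ^ 2 := by positivity
  have hs := LssN_nonneg (N := N) hπ0.le hπ0' hπ1.le hπ2 hπ3.le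
  have hNs := natCast_mul_LssN_le hN hπ0 hπ0' hπ1.le hπ2 hπ3
  exact ⟨_, one_div_pos.mpr hD, _, by positivity, _, mul_pos hπ3 (by nlinarith),
    phiNDot_eq hN hπ0 hπ0' hπ1 hπ2 hπ3 L hD.ne'⟩

theorem phiNDot_nonpos (hN : 0 < N) (hπ0 : 0 < π0) (hπ0' : π0 ≤ 1) (hπ1 : 0 < π1) (hπ2 : 0 ≤ π2)
    (hπ3 : 0 < π3) {L : Fin N → ℝ} (hL : L ∈ OmegaN N) : phiNDot π0 π1 π2 π3 L ≤ 0 := by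
  obtain ⟨J, hJ, a, ha, b, hb, hdot⟩ := phiNDot_eq_neg_mul_of_mem_OmegaN hN hπ0 hπ0' hπ1 hπ2 hπ3 hL
  have hvar := sub_nonneg.mpr (sq_sum_le_natCast_mul_sum_sq L)
  rw [hdot, neg_mul]
  exact neg_nonpos.mpr (by positivity)

theorem phiNDot_eq_zero_iff (hN : 0 < N) (hπ0 : 0 < π0) (hπ0' : π0 ≤ 1) (hπ1 : 0 < π1)
    (hπ2 : 0 ≤ π2) (hπ3 : 0 < π3) {L : Fin N → ℝ} (hL : L ∈ OmegaN N) :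
    phiNDot π0 π1 π2 π3 L = 0 ↔ ∀ i, L i = LssN π0 π1 π2 π3 N := by
  obtain ⟨J, hJ, a, ha, b, hb, hdot⟩ := phiNDot_eq_neg_mul_of_mem_OmegaN hN hπ0 hπ0' hπ1 hπ2 hπ3 hL
  have hvar := sub_nonneg.mpr (sq_sum_le_natCast_mul_sum_sq L)
  rw [hdot, mul_eq_zero, neg_eq_zero, or_iff_right hJ.ne', mul_sq_add_mul_eq_zero_iff ha hb hvar,
    forall_eq_iff_sum_eq_and_card_mul_sum_sq_eq, Fintype.card_fin, sub_eq_zero, sub_eq_zero]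

end Lyapunov

/-- `φ` is a Lyapunov function on `Ω_N` for the `N`-flagella
vector field `F`. -/
theorem phiN_is_lyapunov (π0 π1 π2 π3 : ℝ) (N : ℕ) (hN : 2 ≤ N)
    (hπ0 : 0 < π0) (hπ0' : π0 < 1) (hπ1 : 0 < π1) (hπ2 : 0 < π2) (hπ3 : 0 < π3) :
    (∀ L ∈ OmegaN N, 0 ≤ phiN π0 π1 π2 π3 L ∧
      (phiN π0 π1 π2 π3 L = 0 ↔ ∀ i, L i = LssN π0 π1 π2 π3 N)) ∧
    (∀ L ∈ OmegaN N, phiNDot π0 π1 π2 π3 L ≤ 0 ∧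
      (phiNDot π0 π1 π2 π3 L = 0 → ∀ i, L i = LssN π0 π1 π2 π3 N)) := by
  have hN' : 0 < N := by omega
  exact ⟨fun L _ => ⟨phiN_nonneg hπ1.le hπ3.le L, phiN_eq_zero_iff hπ1 hπ3 L⟩,
    fun L hL => ⟨phiNDot_nonpos hN' hπ0 hπ0'.le hπ1 hπ2.le hπ3 hL,
      (phiNDot_eq_zero_iff hN' hπ0 hπ0'.le hπ1 hπ2.le hπ3 hL).mp⟩⟩
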